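/- Let N ≥ 3 and s ∈ (0,1). Let u : ℝ^N → ℝ be measurable, write u⁺ := max(u, 0) and u⁻ := max(−u, 0), and assume: u⁺ and u⁻ lie in H¹(ℝ^N) with ∫_{ℝ^N} |∇u|² dx = ∫_{ℝ^N} |∇u⁺|² dx + ∫_{ℝ^N} |∇u⁻|² dx; the quantities [u⁺]_s², [u⁻]_s², D := ∫_{ℝ^N}∫_{ℝ^N} u⁺(x) u⁻(y) / |x − y|^{N+2s} dx dy, and ∫_{ℝ^N} |u|^{2*} dx are finite; the tested weak-solution identities hold: ∫_{ℝ^N} |∇u⁺|² dx + [u⁺]_s² + 2D = ∫_{ℝ^N} (u⁺)^{2*} dx and ∫_{ℝ^N} |∇u⁻|² dx + [u⁻]_s² + 2D = ∫_{ℝ^N} (u⁻)^{2*} dx; u is sign-changing in the sense that ∫_{ℝ^N} (u⁺)^{2*} dx > 0 and ∫_{ℝ^N} (u⁻)^{2*} dx > 0; and the sharp Sobolev inequality holds for u⁺ and u⁻, i.e. S_N ( ∫_{ℝ^N} (u⁺)^{2*} dx )^{2/2*} ≤ ∫_{ℝ^N} |∇u⁺|² dx and S_N ( ∫_{ℝ^N}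 (u⁻)^{2*} dx )^{2/2*} ≤ ∫_{ℝ^N} |∇u⁻|² dx. Then the energy I(u) := ½ ( ∫_{ℝ^N} |∇u|² dx + [u]_s² ) − (1/2*) ∫_{ℝ^N} |u|^{2*} dx satisfies I(u) ≥ (2/N) S_N^{N/2}. -/

import Mathlib

open MeasureTheory Real Set

/-- The squared Gagliardo seminorm of order `s` on `ℝ^N`. -/
noncomputable def gagliardoSq (N : ℕ) (s : ℝ) (u : EuclideanSpace ℝ (Fin N) → ℝ) : ℝ :=
  ∫ p : EuclideanSpace ℝ (Fin N) × EuclideanSpace ℝ (Fin N),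
    (u p.1 - u p.2) ^ 2 / ‖p.1 - p.2‖ ^ ((N : ℝ) + 2 * s)

/-- The positive part `u⁺ = max(u,0)`. -/
noncomputable def uPos {N : ℕ} (u : EuclideanSpace ℝ (Fin N) → ℝ) :
    EuclideanSpace ℝ (Fin N) → ℝ := fun x => max (u x) 0

/-- The negative part `u⁻ = max(−u,0)`. -/
noncomputable def uNeg {N : ℕ} (u : EuclideanSpace ℝ (Fin N) → ℝ) :
    EuclideanSpace ℝ (Fin N) → ℝ := fun x => max (-u x) 0

/-- The nonlocal interaction term
`D = ∫∫ u⁺(x)u⁻(y)/|x−y|^{N+2s} dx dy`. -/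
noncomputable def interact (N : ℕ) (s : ℝ) (u : EuclideanSpace ℝ (Fin N) → ℝ) : ℝ :=
  ∫ p : EuclideanSpace ℝ (Fin N) × EuclideanSpace ℝ (Fin N),
    uPos u p.1 * uNeg u p.2 / ‖p.1 - p.2‖ ^ ((N : ℝ) + 2 * s)

/-- The sharp Sobolev constant `S_N = N(N−2)π (Γ(N/2)/Γ(N))^{2/N}`. -/
noncomputable def sobolevS (N : ℕ) : ℝ :=
  N * ((N : ℝ) - 2) * π * (Real.Gamma ((N : ℝ) / 2) / Real.Gamma N) ^ ((2 : ℝ) / N)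

private lemma num_identity (a b : ℝ) :
    (a - b) ^ 2 = (max a 0 - max b 0) ^ 2 + (max (-a) 0 - max (-b) 0) ^ 2
      + 2 * (max a 0 * max (-b) 0) + 2 * (max b 0 * max (-a) 0) := by
  rcases le_total a 0 with ha | ha <;> rcases le_total b 0 with hb | hb
  · rw [max_eq_right ha, max_eq_right hb, max_eq_left (neg_nonneg.2 ha),
      max_eq_left (neg_nonneg.2 hb)]; ring
  · rw [max_eq_right ha, max_eq_left hb, max_eq_left (neg_nonneg.2 ha),
      max_eq_right (neg_nonpos.2 hb)]; ring
  · rw [max_eq_left ha, max_eq_right hb, max_eq_right (neg_nonpos.2 ha),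
      max_eq_left (neg_nonneg.2 hb)]; ring
  · rw [max_eq_left ha, max_eq_left hb, max_eq_right (neg_nonpos.2 ha),
      max_eq_right (neg_nonpos.2 hb)]; ring

/-- Any sign-changing solution of the critical mixed local–nonlocal problem has energy
at least `(2/N) S_N^{N/2}`. -/
theorem stmt_19 (N : ℕ) (hN : 3 ≤ N) (s : ℝ) (hs : s ∈ Set.Ioo (0 : ℝ) 1)
    (u : EuclideanSpace ℝ (Fin N) → ℝ) (hu : Measurable u)
    (hpos : MemLp (uPos u) 2 volume)
    (hneg : MemLp (uNeg u) 2 volume)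
    (hgradPos : Integrable (fun x => ‖gradient (uPos u) x‖ ^ 2) volume)
    (hgradNeg : Integrable (fun x => ‖gradient (uNeg u) x‖ ^ 2) volume)
    (hgradSplit : (∫ x, ‖gradient u x‖ ^ 2) =
      (∫ x, ‖gradient (uPos u) x‖ ^ 2) + ∫ x, ‖gradient (uNeg u) x‖ ^ 2)
    (hgagPos : Integrable
      (fun p : EuclideanSpace ℝ (Fin N) × EuclideanSpace ℝ (Fin N) =>
        (uPos u p.1 - uPos u p.2) ^ 2 / ‖p.1 - p.2‖ ^ ((N : ℝ) + 2 * s)) volume)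
    (hgagNeg : Integrable
      (fun p : EuclideanSpace ℝ (Fin N) × EuclideanSpace ℝ (Fin N) =>
        (uNeg u p.1 - uNeg u p.2) ^ 2 / ‖p.1 - p.2‖ ^ ((N : ℝ) + 2 * s)) volume)
    (hD : Integrable
      (fun p : EuclideanSpace ℝ (Fin N) × EuclideanSpace ℝ (Fin N) =>
        uPos u p.1 * uNeg u p.2 / ‖p.1 - p.2‖ ^ ((N : ℝ) + 2 * s)) volume)
    (hcrit : Integrable (fun x => |u x| ^ (2 * (N : ℝ) / ((N : ℝ) - 2))) volume)
    (htestPos : (∫ x, ‖gradient (uPos u) x‖ ^ 2) + gagliardoSq N s (uPos u) +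
        2 * interact N s u = ∫ x, uPos u x ^ (2 * (N : ℝ) / ((N : ℝ) - 2)))
    (htestNeg : (∫ x, ‖gradient (uNeg u) x‖ ^ 2) + gagliardoSq N s (uNeg u) +
        2 * interact N s u = ∫ x, uNeg u x ^ (2 * (N : ℝ) / ((N : ℝ) - 2)))
    (hsignPos : 0 < ∫ x, uPos u x ^ (2 * (N : ℝ) / ((N : ℝ) - 2)))
    (hsignNeg : 0 < ∫ x, uNeg u x ^ (2 * (N : ℝ) / ((N : ℝ) - 2)))
    (hSobPos : sobolevS N *
        (∫ x, uPos u x ^ (2 * (N : ℝ) / ((N : ℝ) - 2))) ^ (((N : ℝ) - 2) / N) ≤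
      ∫ x, ‖gradient (uPos u) x‖ ^ 2)
    (hSobNeg : sobolevS N *
        (∫ x, uNeg u x ^ (2 * (N : ℝ) / ((N : ℝ) - 2))) ^ (((N : ℝ) - 2) / N) ≤
      ∫ x, ‖gradient (uNeg u) x‖ ^ 2) :
    (2 / N) * sobolevS N ^ ((N : ℝ) / 2) ≤
      (1 / 2) * ((∫ x, ‖gradient u x‖ ^ 2) + gagliardoSq N s u) -
        (((N : ℝ) - 2) / (2 * N)) * ∫ x, |u x| ^ (2 * (N : ℝ) / ((N : ℝ) - 2)) := by
  obtain ⟨hs0, hs1⟩ := hs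
  have hN3 : (3:ℝ) ≤ (N:ℝ) := by exact_mod_cast hN
  have hNpos : (0:ℝ) < (N:ℝ) := by linarith
  have hN2 : (0:ℝ) < (N:ℝ) - 2 := by linarith
  have hN0 : (N:ℝ) ≠ 0 := hNpos.ne'
  have hepos : 0 < 2 * (N:ℝ) / ((N:ℝ) - 2) := by positivity
  have hSpos : 0 < sobolevS N := by
    have h1 : 0 < Real.Gamma ((N:ℝ)/2) := Real.Gamma_pos_of_pos (by positivity)
    have h2 : 0 < Real.Gamma (N:ℝ) := Real.Gamma_pos_of_pos hNpos
    exact mul_pos (mul_pos (mul_pos hNpos hN2) Real.pi_pos)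
      (Real.rpow_pos_of_pos (div_pos h1 h2) _)
  have hrnn : ∀ p : EuclideanSpace ℝ (Fin N) × EuclideanSpace ℝ (Fin N),
      (0:ℝ) ≤ ‖p.1 - p.2‖ ^ ((N:ℝ) + 2*s) := fun p => Real.rpow_nonneg (norm_nonneg _) _
  have h0P : ∀ x, 0 ≤ uPos u x := fun x => le_max_right _ _
  have h0N : ∀ x, 0 ≤ uNeg u x := fun x => le_max_right _ _
  have hPabs : ∀ x, uPos u x ≤ |u x| := fun x => max_le (le_abs_self _) (abs_nonneg _)
  have hNabs : ∀ x, uNeg u x ≤ |u x| := fun x => max_le (neg_le_abs _) (abs_nonneg _)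
  have hD0 : 0 ≤ interact N s u :=
    integral_nonneg fun p => div_nonneg (mul_nonneg (h0P p.1) (h0N p.2)) (hrnn p)
  have hGP0 : 0 ≤ gagliardoSq N s (uPos u) :=
    integral_nonneg fun p => div_nonneg (sq_nonneg _) (hrnn p)
  have hGN0 : 0 ≤ gagliardoSq N s (uNeg u) :=
    integral_nonneg fun p => div_nonneg (sq_nonneg _) (hrnn p)
  -- the key Sobolev lower bound
  have key : ∀ P : ℝ, 0 < P → sobolevS N * P ^ (((N:ℝ)-2)/(N:ℝ)) ≤ P →
      sobolevS N ^ ((N:ℝ)/2) ≤ P := by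
    intro P hPpos hSP
    have hrp : 0 < P ^ (((N:ℝ)-2)/(N:ℝ)) := Real.rpow_pos_of_pos hPpos _
    have hSle : sobolevS N ≤ P ^ ((2:ℝ)/(N:ℝ)) := by
      have h := (le_div_iff₀ hrp).2 hSP
      rwa [show P / P ^ (((N:ℝ)-2)/(N:ℝ)) = P ^ ((2:ℝ)/(N:ℝ)) by
        rw [show (2:ℝ)/(N:ℝ) = 1 - ((N:ℝ)-2)/(N:ℝ) by field_simp; ring,
          Real.rpow_sub hPpos, Real.rpow_one]] at h
    calc sobolevS N ^ ((N:ℝ)/2) ≤ (P ^ ((2:ℝ)/(N:ℝ))) ^ ((N:ℝ)/2) :=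
          Real.rpow_le_rpow hSpos.le hSle (by positivity)
      _ = P := by
          rw [← Real.rpow_mul hPpos.le,
            show (2:ℝ)/(N:ℝ) * ((N:ℝ)/2) = 1 by field_simp, Real.rpow_one]
  have hTP : sobolevS N ^ ((N:ℝ)/2) ≤ ∫ x, uPos u x ^ (2 * (N:ℝ) / ((N:ℝ) - 2)) := by
    refine key _ hsignPos (hSobPos.trans ?_)
    linarith [htestPos, hGP0, hD0]
  have hTQ : sobolevS N ^ ((N:ℝ)/2) ≤ ∫ x, uNeg u x ^ (2 * (N:ℝ) / ((N:ℝ) - 2)) := by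
    refine key _ hsignNeg (hSobNeg.trans ?_)
    linarith [htestNeg, hGN0, hD0]
  -- splitting of the critical term
  have hmeasP : Measurable (uPos u) := hu.max measurable_const
  have hmeasN : Measurable (uNeg u) := hu.neg.max measurable_const
  have hintP : Integrable (fun x => uPos u x ^ (2 * (N:ℝ) / ((N:ℝ) - 2))) volume := by
    refine hcrit.mono ((show Measurable fun x => uPos u x ^ (2 * (N:ℝ) / ((N:ℝ) - 2)) by fun_prop).aestronglyMeasurable) (ae_of_all _ fun x => ?_)
    rw [Real.norm_eq_abs, Real.norm_eq_abs,
      abs_of_nonneg (Real.rpow_nonneg (h0P x) _),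
      abs_of_nonneg (Real.rpow_nonneg (abs_nonneg _) _)]
    exact Real.rpow_le_rpow (h0P x) (hPabs x) hepos.le
  have hintN : Integrable (fun x => uNeg u x ^ (2 * (N:ℝ) / ((N:ℝ) - 2))) volume := by
    refine hcrit.mono ((show Measurable fun x => uNeg u x ^ (2 * (N:ℝ) / ((N:ℝ) - 2)) by fun_prop).aestronglyMeasurable) (ae_of_all _ fun x => ?_)
    rw [Real.norm_eq_abs, Real.norm_eq_abs,
      abs_of_nonneg (Real.rpow_nonneg (h0N x) _),
      abs_of_nonneg (Real.rpow_nonneg (abs_nonneg _) _)]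
    exact Real.rpow_le_rpow (h0N x) (hNabs x) hepos.le
  have hept : ∀ x, |u x| ^ (2 * (N:ℝ) / ((N:ℝ) - 2)) =
      uPos u x ^ (2 * (N:ℝ) / ((N:ℝ) - 2)) + uNeg u x ^ (2 * (N:ℝ) / ((N:ℝ) - 2)) := by
    intro x
    rcases le_total (u x) 0 with hx | hx
    · rw [show uPos u x = 0 from max_eq_right hx,
        show uNeg u x = -u x from max_eq_left (neg_nonneg.2 hx),
        abs_of_nonpos hx, Real.zero_rpow hepos.ne']
      ring
    · rw [show uPos u x = u x from max_eq_left hx,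
        show uNeg u x = 0 from max_eq_right (neg_nonpos.2 hx),
        abs_of_nonneg hx, Real.zero_rpow hepos.ne']
      ring
  have hIntSplit : (∫ x, |u x| ^ (2 * (N:ℝ) / ((N:ℝ) - 2)))
      = (∫ x, uPos u x ^ (2 * (N:ℝ) / ((N:ℝ) - 2)))
        + ∫ x, uNeg u x ^ (2 * (N:ℝ) / ((N:ℝ) - 2)) := by
    rw [← integral_add hintP hintN]
    exact integral_congr_ae (ae_of_all _ hept)
  -- splitting of the Gagliardo seminorm
  have hswapInt : Integrable (fun p : EuclideanSpace ℝ (Fin N) × EuclideanSpace ℝ (Fin N) =>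
      uPos u p.2 * uNeg u p.1 / ‖p.1 - p.2‖ ^ ((N:ℝ) + 2*s)) volume := by
    rw [Measure.volume_eq_prod] at hD ⊢
    exact hD.swap.congr (ae_of_all _ fun p => by
      simp only [Function.comp_apply, Prod.fst_swap, Prod.snd_swap]
      rw [norm_sub_rev])
  have h4 : (∫ p : EuclideanSpace ℝ (Fin N) × EuclideanSpace ℝ (Fin N),
      uPos u p.2 * uNeg u p.1 / ‖p.1 - p.2‖ ^ ((N:ℝ) + 2*s)) = interact N s u := by
    unfold interact
    rw [Measure.volume_eq_prod,
      ← integral_prod_swap (fun q : EuclideanSpace ℝ (Fin N) × EuclideanSpace ℝ (Fin N) =>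
        uPos u q.1 * uNeg u q.2 / ‖q.1 - q.2‖ ^ ((N:ℝ) + 2*s))]
    exact integral_congr_ae (ae_of_all _ fun p => by
      simp only [Prod.fst_swap, Prod.snd_swap]
      rw [norm_sub_rev])
  have hpt : ∀ p : EuclideanSpace ℝ (Fin N) × EuclideanSpace ℝ (Fin N),
      (u p.1 - u p.2) ^ 2 / ‖p.1 - p.2‖ ^ ((N:ℝ) + 2*s)
        = (uPos u p.1 - uPos u p.2) ^ 2 / ‖p.1 - p.2‖ ^ ((N:ℝ) + 2*s)
          + (uNeg u p.1 - uNeg u p.2) ^ 2 / ‖p.1 - p.2‖ ^ ((N:ℝ) + 2*s)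
          + 2 * (uPos u p.1 * uNeg u p.2 / ‖p.1 - p.2‖ ^ ((N:ℝ) + 2*s))
          + 2 * (uPos u p.2 * uNeg u p.1 / ‖p.1 - p.2‖ ^ ((N:ℝ) + 2*s)) := by
    intro p
    simp only [uPos, uNeg]
    rw [num_identity (u p.1) (u p.2)]
    ring
  have hf3 : Integrable (fun p : EuclideanSpace ℝ (Fin N) × EuclideanSpace ℝ (Fin N) =>
      2 * (uPos u p.1 * uNeg u p.2 / ‖p.1 - p.2‖ ^ ((N:ℝ) + 2*s))) volume := hD.const_mul 2
  have hf4 : Integrable (fun p : EuclideanSpace ℝ (Fin N) × EuclideanSpace ℝ (Fin N) =>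
      2 * (uPos u p.2 * uNeg u p.1 / ‖p.1 - p.2‖ ^ ((N:ℝ) + 2*s))) volume := hswapInt.const_mul 2
  have hI12 : Integrable (fun p : EuclideanSpace ℝ (Fin N) × EuclideanSpace ℝ (Fin N) =>
      (uPos u p.1 - uPos u p.2) ^ 2 / ‖p.1 - p.2‖ ^ ((N:ℝ) + 2*s)
        + (uNeg u p.1 - uNeg u p.2) ^ 2 / ‖p.1 - p.2‖ ^ ((N:ℝ) + 2*s)) volume :=
    hgagPos.add hgagNeg
  have hI123 : Integrable (fun p : EuclideanSpace ℝ (Fin N) × EuclideanSpace ℝ (Fin N) =>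
      (uPos u p.1 - uPos u p.2) ^ 2 / ‖p.1 - p.2‖ ^ ((N:ℝ) + 2*s)
        + (uNeg u p.1 - uNeg u p.2) ^ 2 / ‖p.1 - p.2‖ ^ ((N:ℝ) + 2*s)
        + 2 * (uPos u p.1 * uNeg u p.2 / ‖p.1 - p.2‖ ^ ((N:ℝ) + 2*s))) volume :=
    hI12.add hf3
  have hgagSplit : gagliardoSq N s u = gagliardoSq N s (uPos u) + gagliardoSq N s (uNeg u)
      + 4 * interact N s u := by
    unfold gagliardoSq
    calc (∫ p : EuclideanSpace ℝ (Fin N) × EuclideanSpace ℝ (Fin N),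
          (u p.1 - u p.2) ^ 2 / ‖p.1 - p.2‖ ^ ((N:ℝ) + 2*s))
        = ∫ p : EuclideanSpace ℝ (Fin N) × EuclideanSpace ℝ (Fin N),
            ((uPos u p.1 - uPos u p.2) ^ 2 / ‖p.1 - p.2‖ ^ ((N:ℝ) + 2*s)
            + (uNeg u p.1 - uNeg u p.2) ^ 2 / ‖p.1 - p.2‖ ^ ((N:ℝ) + 2*s)
            + 2 * (uPos u p.1 * uNeg u p.2 / ‖p.1 - p.2‖ ^ ((N:ℝ) + 2*s)))
            + 2 * (uPos u p.2 * uNeg u p.1 / ‖p.1 - p.2‖ ^ ((N:ℝ) + 2*s)) :=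
          integral_congr_ae (ae_of_all _ hpt)
      _ = (∫ p : EuclideanSpace ℝ (Fin N) × EuclideanSpace ℝ (Fin N),
            (uPos u p.1 - uPos u p.2) ^ 2 / ‖p.1 - p.2‖ ^ ((N:ℝ) + 2*s)
            + (uNeg u p.1 - uNeg u p.2) ^ 2 / ‖p.1 - p.2‖ ^ ((N:ℝ) + 2*s)
            + 2 * (uPos u p.1 * uNeg u p.2 / ‖p.1 - p.2‖ ^ ((N:ℝ) + 2*s)))
          + ∫ p : EuclideanSpace ℝ (Fin N) × EuclideanSpace ℝ (Fin N),
            2 * (uPos u p.2 * uNeg u p.1 / ‖p.1 - p.2‖ ^ ((N:ℝ) + 2*s)) :=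
          integral_add hI123 hf4
      _ = ((∫ p : EuclideanSpace ℝ (Fin N) × EuclideanSpace ℝ (Fin N),
            (uPos u p.1 - uPos u p.2) ^ 2 / ‖p.1 - p.2‖ ^ ((N:ℝ) + 2*s)
            + (uNeg u p.1 - uNeg u p.2) ^ 2 / ‖p.1 - p.2‖ ^ ((N:ℝ) + 2*s))
          + ∫ p : EuclideanSpace ℝ (Fin N) × EuclideanSpace ℝ (Fin N),
            2 * (uPos u p.1 * uNeg u p.2 / ‖p.1 - p.2‖ ^ ((N:ℝ) + 2*s)))
          + ∫ p : EuclideanSpace ℝ (Fin N) × EuclideanSpace ℝ (Fin N),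
            2 * (uPos u p.2 * uNeg u p.1 / ‖p.1 - p.2‖ ^ ((N:ℝ) + 2*s)) := by
          rw [integral_add hI12 hf3]
      _ = ((∫ p : EuclideanSpace ℝ (Fin N) × EuclideanSpace ℝ (Fin N),
            (uPos u p.1 - uPos u p.2) ^ 2 / ‖p.1 - p.2‖ ^ ((N:ℝ) + 2*s))
          + ∫ p : EuclideanSpace ℝ (Fin N) × EuclideanSpace ℝ (Fin N),
            (uNeg u p.1 - uNeg u p.2) ^ 2 / ‖p.1 - p.2‖ ^ ((N:ℝ) + 2*s))
          + (∫ p : EuclideanSpace ℝ (Fin N) × EuclideanSpace ℝ (Fin N),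
            2 * (uPos u p.1 * uNeg u p.2 / ‖p.1 - p.2‖ ^ ((N:ℝ) + 2*s)))
          + ∫ p : EuclideanSpace ℝ (Fin N) × EuclideanSpace ℝ (Fin N),
            2 * (uPos u p.2 * uNeg u p.1 / ‖p.1 - p.2‖ ^ ((N:ℝ) + 2*s)) := by
          rw [integral_add hgagPos hgagNeg]
      _ = _ := by
          rw [integral_const_mul, integral_const_mul, h4]
          unfold interact
          ring
  -- final assembly
  have hsum : ((∫ x, ‖gradient (uPos u) x‖ ^ 2) + ∫ x, ‖gradient (uNeg u) x‖ ^ 2)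
      + (gagliardoSq N s (uPos u) + gagliardoSq N s (uNeg u) + 4 * interact N s u)
      = (∫ x, uPos u x ^ (2 * (N:ℝ) / ((N:ℝ) - 2)))
        + ∫ x, uNeg u x ^ (2 * (N:ℝ) / ((N:ℝ) - 2)) := by
    linarith [htestPos, htestNeg]
  rw [hgradSplit, hgagSplit, hIntSplit, hsum]
  have hfinal : (1:ℝ)/2 * ((∫ x, uPos u x ^ (2 * (N:ℝ) / ((N:ℝ) - 2)))
        + ∫ x, uNeg u x ^ (2 * (N:ℝ) / ((N:ℝ) - 2)))
      - ((N:ℝ) - 2) / (2 * (N:ℝ)) * ((∫ x, uPos u x ^ (2 * (N:ℝ) / ((N:ℝ) - 2)))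
        + ∫ x, uNeg u x ^ (2 * (N:ℝ) / ((N:ℝ) - 2)))
      = ((∫ x, uPos u x ^ (2 * (N:ℝ) / ((N:ℝ) - 2)))
        + ∫ x, uNeg u x ^ (2 * (N:ℝ) / ((N:ℝ) - 2))) / (N:ℝ) := by
    field_simp
    ring
  rw [hfinal, show (2:ℝ)/(N:ℝ) * sobolevS N ^ ((N:ℝ)/2)
    = 2 * sobolevS N ^ ((N:ℝ)/2) / (N:ℝ) by ring]
  have h2T : 2 * sobolevS N ^ ((N:ℝ)/2)
      ≤ (∫ x, uPos u x ^ (2 * (N:ℝ) / ((N:ℝ) - 2)))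
        + ∫ x, uNeg u x ^ (2 * (N:ℝ) / ((N:ℝ) - 2)) := by linarith
  exact (div_le_div_iff_of_pos_right hNpos).mpr h2T
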